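/- Let ν ∈ ℝ^J, let χ ∈ ℝ_+^J, and let θ ∈ ℝ_+^J be such that χ = ν + Σ_{k∈I} θ_k d_k, and such that the support S := {k ∈ I : θ_k > 0} satisfies S ⊆ {k ∈ I : χ_k = 0} and S ≠ I. Then 0 ≤ Σ_{k∈S} θ_k/(1−β_k) = (−Σ_{k∈S} ν_k)/(1 − Σ_{k∈S} β_k), and for every j ∈ I: if θ_j > 0 then ν_j = −θ_j/(1−β_j) + β_j·(−Σ_{k∈S} ν_k)/(1 − Σ_{k∈S} β_k), while if θ_j = 0 then ν_j = χ_j + β_j·(−Σ_{k∈S} ν_k)/(1 − Σ_{k∈S} β_k). -/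

import Mathlib

/-!
Since `(d_k)_j = δ_{kj} / (1 - β_j) - β_j / (1 - β_k)`, the `j`-th coordinate of `Σ_k θ_k d_k` is
`θ_j / (1 - β_j) - β_j T` with `T = Σ_k θ_k / (1 - β_k)`, so `ν_j = χ_j - θ_j / (1 - β_j) + β_j T`.
Summing this over the support `S`, where `χ` vanishes, gives `T (1 - Σ_{k∈S} β_k) = -Σ_{k∈S} ν_k`,
and `Σ_{k∈S} β_k < 1` because `S` misses some index of positive weight.
-/

open Finset

section GPSDirection

variable {ι : Type*} [Fintype ι] [DecidableEq ι]

noncomputable def gpsDirection (β : ι → ℝ) (i : ι) : ι → ℝ :=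
  fun j => if j = i then 1 else -β j / (1 - β i)

theorem sum_smul_gpsDirection_apply (β θ : ι → ℝ) {j : ι} (hβj : β j ≠ 1) :
    (∑ k, θ k • gpsDirection β k) j = θ j / (1 - β j) - β j * ∑ k, θ k / (1 - β k) := by
  have hj : 1 - β j ≠ 0 := sub_ne_zero.mpr hβj.symm
  have hθj : θ j / (1 - β j) = ∑ k, if k = j then θ j / (1 - β j) else 0 := by simp
  rw [Finset.sum_apply, mul_sum, hθj, ← sum_sub_distrib]
  refine sum_congr rfl fun k _ => ?_
  by_cases hkj : k = j
  · subst hkj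
    simp only [gpsDirection, Pi.smul_apply, smul_eq_mul, if_true, mul_one]
    field_simp
  · simp only [gpsDirection, Pi.smul_apply, smul_eq_mul, Ne.symm hkj, hkj, if_false]
    ring

theorem apply_eq_of_eq_add_sum_smul_gpsDirection {β ν χ θ : ι → ℝ}
    (hrep : χ = ν + ∑ k, θ k • gpsDirection β k) {S : Finset ι} (hθS : ∀ k ∉ S, θ k = 0)
    {j : ι} (hβj : β j ≠ 1) :
    ν j = χ j - θ j / (1 - β j) + β j * ∑ k ∈ S, θ k / (1 - β k) := by
  have hT : ∑ k, θ k / (1 - β k) = ∑ k ∈ S, θ k / (1 - β k) :=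
    (sum_subset (subset_univ S) fun k _ hk => by rw [hθS k hk, zero_div]).symm
  have hχj := congrFun hrep j
  rw [Pi.add_apply, sum_smul_gpsDirection_apply β θ hβj, hT] at hχj
  linarith

theorem sum_div_one_sub_mul_eq_neg_sum {β ν χ θ : ι → ℝ} (hβ : ∀ k, β k ≠ 1)
    (hrep : χ = ν + ∑ k, θ k • gpsDirection β k) {S : Finset ι} (hθS : ∀ k ∉ S, θ k = 0)
    (hχS : ∀ k ∈ S, χ k = 0) :
    (∑ k ∈ S, θ k / (1 - β k)) * (1 - ∑ k ∈ S, β k) = -∑ k ∈ S, ν k := by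
  set T := ∑ k ∈ S, θ k / (1 - β k)
  have hν : ∑ k ∈ S, ν k = ∑ k ∈ S, (χ k - θ k / (1 - β k) + β k * T) :=
    sum_congr rfl fun k _ => apply_eq_of_eq_add_sum_smul_gpsDirection hrep hθS (hβ k)
  rw [hν, sum_add_distrib, sum_sub_distrib, sum_eq_zero hχS, ← sum_mul]
  ring

end GPSDirection

theorem sum_lt_one_of_ne_univ {ι : Type*} [Fintype ι] {β : ι → ℝ} (hβ : ∀ i, 0 < β i)
    (hβsum : ∑ i, β i = 1) {S : Finset ι} (hS : S ≠ univ) : ∑ k ∈ S, β k < 1 := by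
  obtain ⟨i, hi⟩ : ∃ i, i ∉ S := by simpa [eq_univ_iff_forall] using hS
  calc ∑ k ∈ S, β k < ∑ k, β k :=
        sum_lt_sum_of_subset (subset_univ S) (mem_univ i) hi (hβ i) fun j _ _ => (hβ j).le
    _ = 1 := hβsum

theorem gps_affine_image_formulas_general
    (J : ℕ) (β : Fin J → ℝ)
    (hβ : ∀ i, 0 < β i ∧ β i < 1) (hβsum : ∑ i, β i = 1)
    (d : Fin J → Fin J → ℝ)
    (hd : ∀ i j, d i j = if j = i then 1 else -(β j) / (1 - β i))
    (ν χ θ : Fin J → ℝ) (hθ : ∀ k, 0 ≤ θ k)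
    (hrep : χ = ν + ∑ k, θ k • d k)
    (S : Finset (Fin J)) (hS : S = Finset.univ.filter (fun k => 0 < θ k))
    (hsupp : ∀ k ∈ S, χ k = 0) (hSne : S ≠ Finset.univ) :
    0 ≤ ∑ k ∈ S, θ k / (1 - β k) ∧
    ∑ k ∈ S, θ k / (1 - β k) = (-∑ k ∈ S, ν k) / (1 - ∑ k ∈ S, β k) ∧
    ∀ j : Fin J,
      (0 < θ j →
        ν j = -(θ j / (1 - β j)) + β j * ((-∑ k ∈ S, ν k) / (1 - ∑ k ∈ S, β k))) ∧
      (θ j = 0 →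
        ν j = χ j + β j * ((-∑ k ∈ S, ν k) / (1 - ∑ k ∈ S, β k))) := by
  obtain rfl : d = gpsDirection β := funext₂ hd
  have hβ1 (k : Fin J) : β k ≠ 1 := (hβ k).2.ne
  have hθS (k : Fin J) (hk : k ∉ S) : θ k = 0 :=
    le_antisymm (by simpa [hS] using hk) (hθ k)
  have hν (j : Fin J) := apply_eq_of_eq_add_sum_smul_gpsDirection hrep hθS (hβ1 j)
  have hden : 1 - ∑ k ∈ S, β k ≠ 0 :=
    (sub_pos.mpr (sum_lt_one_of_ne_univ (fun i => (hβ i).1) hβsum hSne)).ne'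
  have hT := eq_div_of_mul_eq hden (sum_div_one_sub_mul_eq_neg_sum hβ1 hrep hθS hsupp)
  refine ⟨sum_nonneg fun k _ => div_nonneg (hθ k) (sub_nonneg.mpr (hβ k).2.le), hT,
    fun j => ⟨fun hj => ?_, fun hj => ?_⟩⟩
  · rw [hν j, hsupp j (by simp [hS, hj]), ← hT]
    ring
  · rw [hν j, hj, ← hT]
    ring

/-- if `χ = ν + Σ_k θ_k d_k` with `χ ∈ ℝ_+^J`, `θ ∈ ℝ_+^J`, and the support
`S = {k : θ_k > 0}` satisfies `S ⊆ {k : χ_k = 0}` and `S ≠ I`, then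
`0 ≤ Σ_{k∈S} θ_k/(1−β_k) = (−Σ_{k∈S} ν_k)/(1 − Σ_{k∈S} β_k)` and the stated formulas
for `ν_j` hold for every `j`. -/
theorem gps_affine_image_formulas
    (J : ℕ) (hJ : 2 ≤ J) (β : Fin J → ℝ)
    (hβ : ∀ i, 0 < β i ∧ β i < 1) (hβsum : ∑ i, β i = 1)
    (d : Fin J → Fin J → ℝ)
    (hd : ∀ i j, d i j = if j = i then 1 else -(β j) / (1 - β i))
    (ν χ θ : Fin J → ℝ) (hχ : ∀ k, 0 ≤ χ k) (hθ : ∀ k, 0 ≤ θ k)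
    (hrep : χ = ν + ∑ k, θ k • d k)
    (S : Finset (Fin J)) (hS : S = Finset.univ.filter (fun k => 0 < θ k))
    (hsupp : ∀ k ∈ S, χ k = 0) (hSne : S ≠ Finset.univ) :
    0 ≤ ∑ k ∈ S, θ k / (1 - β k) ∧
    ∑ k ∈ S, θ k / (1 - β k) = (-∑ k ∈ S, ν k) / (1 - ∑ k ∈ S, β k) ∧
    ∀ j : Fin J,
      (0 < θ j →
        ν j = -(θ j / (1 - β j)) + β j * ((-∑ k ∈ S, ν k) / (1 - ∑ k ∈ S, β k))) ∧
      (θ j = 0 →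
        ν j = χ j + β j * ((-∑ k ∈ S, ν k) / (1 - ∑ k ∈ S, β k))) :=
  gps_affine_image_formulas_general J β hβ hβsum d hd ν χ θ hθ hrep S hS hsupp hSne
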